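/- A bicomplex matrix A ∈ 𝔹ℂ^{n×n} is hyperbolic positive if and only if there exist r ∈ ℕ and bicomplex column vectors a₁, …, a_r ∈ 𝔹ℂ^{n×1}, which may moreover be chosen pairwise orthogonal with respect to the 𝔻-valued inner product, such that A = Σ_{i=1}^{r} aᵢ·(aᵢ*)ᵗ. -/

import Mathlib

/-!
In the idempotent basis `Z = λ₁ e₁ + λ₂ e₂` bicomplex arithmetic is componentwise complex
arithmetic, the `*`-conjugate conjugates both components, and every pair of complex vectors
`(c₁, c₂)` comes from a bicomplex vector. So `(c*)ᵗ A c` has idempotent components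
`c₁ᴴ 𝒜₁ c₁` and `c₂ᴴ 𝒜₂ c₂`, and `A` is hyperbolic positive iff `𝒜₁` and `𝒜₂` are positive
semidefinite. The spectral theorem writes each `𝒜ₗ` as `Σᵢ uₗᵢ uₗᵢᴴ` with orthogonal `uₗᵢ`
(scaled eigenvectors), and the vectors `aᵢ = u₁ᵢ e₁ + u₂ᵢ e₂` then give `A = Σᵢ aᵢ (aᵢ*)ᵗ`
with `⟨aᵢ, aⱼ⟩_𝔻 = 0` for `i ≠ j`. Conversely, the idempotent components of `a (a*)ᵗ` are
`vecMulVec aₗ (star aₗ)`, which are positive semidefinite.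
-/

open Complex Matrix Kronecker BigOperators

open scoped ComplexOrder

/-- Bicomplex numbers, modeled as pairs `(z₁, z₂) ∈ ℂ × ℂ` representing `z₁ + j z₂`.
Addition is the componentwise (Prod) addition. -/
abbrev BC : Type := ℂ × ℂ

noncomputable section

/-- Bicomplex multiplication: `(z₁,z₂)·(w₁,w₂) = (z₁w₁ − z₂w₂, z₁w₂ + z₂w₁)`. -/
def bcMul (z w : BC) : BC := (z.1 * w.1 - z.2 * w.2, z.1 * w.2 + z.2 * w.1)

/-- The `*`-conjugate `Z* = conj z₁ − j conj z₂`. -/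
def bcStar (z : BC) : BC := ((starRingEnd ℂ) z.1, -((starRingEnd ℂ) z.2))

/-- First idempotent component `λ₁ = z₁ − i z₂`. -/
def idem1 (z : BC) : ℂ := z.1 - Complex.I * z.2

/-- Second idempotent component `λ₂ = z₁ + i z₂`. -/
def idem2 (z : BC) : ℂ := z.1 + Complex.I * z.2

/-- Membership in `𝔻⁺`: both idempotent components are nonnegative real numbers. -/
def inDplus (z : BC) : Prop :=
  (idem1 z).im = 0 ∧ 0 ≤ (idem1 z).re ∧ (idem2 z).im = 0 ∧ 0 ≤ (idem2 z).re

/-- A bicomplex matrix `A = A₁ + j A₂` is a pair of complex matrices. -/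
abbrev BCMat (I J : Type) : Type := Matrix I J ℂ × Matrix I J ℂ

/-- Bicomplex matrix multiplication, induced by bicomplex multiplication. -/
def bmul {I J K : Type} [Fintype J] (A : BCMat I J) (B : BCMat J K) : BCMat I K :=
  (A.1 * B.1 - A.2 * B.2, A.1 * B.2 + A.2 * B.1)

/-- `(A*)ᵗ`: the entrywise `*`-conjugate followed by transpose. -/
def bcStarT {I J : Type} (A : BCMat I J) : BCMat J I := (A.1ᴴ, -(A.2ᴴ))

/-- The `(j,k)` entry of a bicomplex matrix, as a bicomplex number. -/
def bcEntry {I J : Type} (A : BCMat I J) (j : I) (k : J) : BC := (A.1 j k, A.2 j k)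

/-- First idempotent component `𝒜₁ = A₁ − i A₂` of a bicomplex matrix. -/
def midem1 {I J : Type} (A : BCMat I J) : Matrix I J ℂ := A.1 - Complex.I • A.2

/-- Second idempotent component `𝒜₂ = A₁ + i A₂` of a bicomplex matrix. -/
def midem2 {I J : Type} (A : BCMat I J) : Matrix I J ℂ := A.1 + Complex.I • A.2

/-- The bicomplex number `(c*)ᵗ · A · c`. -/
def quadForm {I : Type} [Fintype I] (A : BCMat I I) (c : I → BC) : BC :=
  ∑ j, ∑ k, bcMul (bcStar (c j)) (bcMul (bcEntry A j k) (c k))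

/-- `A` is hyperbolic positive if `(c*)ᵗ · A · c ∈ 𝔻⁺` for every bicomplex vector `c`. -/
def HypPos {I : Type} [Fintype I] (A : BCMat I I) : Prop :=
  ∀ c : I → BC, inDplus (quadForm A c)

/-- Bicomplex trace `Tr(A) = Tr(A₁) + j Tr(A₂)`. -/
def bcTrace {I : Type} [Fintype I] (A : BCMat I I) : BC := (A.1.trace, A.2.trace)

/-- The bicomplex tensor product
`A ⊗ⱼ B = (A₁⊗B₁ − A₂⊗B₂) + j (A₁⊗B₂ + A₂⊗B₁)`. -/
def bkron {I J K L : Type} (A : BCMat I J) (B : BCMat K L) : BCMat (I × K) (J × L) :=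
  (A.1 ⊗ₖ B.1 - A.2 ⊗ₖ B.2, A.1 ⊗ₖ B.2 + A.2 ⊗ₖ B.1)

end

noncomputable section

/-- The `𝔻`-valued inner product `⟨X,Y⟩_𝔻 = Σ_k (X k)* · (Y k)`. -/
def bcDinner {I : Type} [Fintype I] (X Y : I → BC) : BC :=
  ∑ k, bcMul (bcStar (X k)) (Y k)

/-- The bicomplex rank-one matrix `a · (a*)ᵗ`. -/
def bcOuter {I : Type} (a : I → BC) : BCMat I I :=
  (Matrix.of fun j k => (bcMul (a j) (bcStar (a k))).1,
   Matrix.of fun j k => (bcMul (a j) (bcStar (a k))).2)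

/-- The bicomplex number `u e₁ + v e₂`. -/
def ofIdem (u v : ℂ) : BC := ((u + v) / 2, Complex.I * (u - v) / 2)

lemma idem1_ofIdem (u v : ℂ) : idem1 (ofIdem u v) = u := by
  simp only [idem1, ofIdem]
  linear_combination (-(u - v) / 2) * Complex.I_sq

lemma idem2_ofIdem (u v : ℂ) : idem2 (ofIdem u v) = v := by
  simp only [idem2, ofIdem]
  linear_combination ((u - v) / 2) * Complex.I_sq

lemma bc_ext_idem {z w : BC} (h1 : idem1 z = idem1 w) (h2 : idem2 z = idem2 w) : z = w := by
  simp only [idem1, idem2] at h1 h2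
  refine Prod.ext (by linear_combination (h1 + h2) / 2) (mul_left_cancel₀ Complex.I_ne_zero ?_)
  linear_combination (h2 - h1) / 2

lemma idem1_bcMul (z w : BC) : idem1 (bcMul z w) = idem1 z * idem1 w := by
  simp only [idem1, bcMul]
  linear_combination (-(z.2 * w.2)) * Complex.I_sq

lemma idem2_bcMul (z w : BC) : idem2 (bcMul z w) = idem2 z * idem2 w := by
  simp only [idem2, bcMul]
  linear_combination (-(z.2 * w.2)) * Complex.I_sq

lemma idem1_bcStar (z : BC) : idem1 (bcStar z) = star (idem1 z) := by
  simp only [idem1, bcStar, RCLike.star_def, map_sub, map_mul, Complex.conj_I]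
  ring

lemma idem2_bcStar (z : BC) : idem2 (bcStar z) = star (idem2 z) := by
  simp only [idem2, bcStar, RCLike.star_def, map_add, map_mul, Complex.conj_I]
  ring

lemma idem1_sum {ι : Type*} (s : Finset ι) (f : ι → BC) :
    idem1 (∑ i ∈ s, f i) = ∑ i ∈ s, idem1 (f i) := by
  simp only [idem1, Prod.fst_sum, Prod.snd_sum, Finset.mul_sum, Finset.sum_sub_distrib]

lemma idem2_sum {ι : Type*} (s : Finset ι) (f : ι → BC) :
    idem2 (∑ i ∈ s, f i) = ∑ i ∈ s, idem2 (f i) := by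
  simp only [idem2, Prod.fst_sum, Prod.snd_sum, Finset.mul_sum, Finset.sum_add_distrib]

lemma inDplus_iff (z : BC) : inDplus z ↔ 0 ≤ idem1 z ∧ 0 ≤ idem2 z := by
  simp only [inDplus, Complex.nonneg_iff, eq_comm (a := (0 : ℝ))]
  tauto

section

variable {m p : Type}

lemma idem1_comp_ofIdem (u v : m → ℂ) : idem1 ∘ (fun k => ofIdem (u k) (v k)) = u :=
  funext fun k => idem1_ofIdem (u k) (v k)

lemma idem2_comp_ofIdem (u v : m → ℂ) : idem2 ∘ (fun k => ofIdem (u k) (v k)) = v :=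
  funext fun k => idem2_ofIdem (u k) (v k)

lemma idem1_bcEntry (A : BCMat m p) (j : m) (k : p) :
    idem1 (bcEntry A j k) = midem1 A j k := by
  simp [idem1, bcEntry, midem1]

lemma idem2_bcEntry (A : BCMat m p) (j : m) (k : p) :
    idem2 (bcEntry A j k) = midem2 A j k := by
  simp [idem2, bcEntry, midem2]

lemma bcMat_ext_midem {A B : BCMat m p} (h1 : midem1 A = midem1 B) (h2 : midem2 A = midem2 B) :
    A = B := by
  have h : ∀ j k, bcEntry A j k = bcEntry B j k := fun j k =>
    bc_ext_idem (by rw [idem1_bcEntry, idem1_bcEntry, h1])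
      (by rw [idem2_bcEntry, idem2_bcEntry, h2])
  exact Prod.ext (Matrix.ext fun j k => congrArg Prod.fst (h j k))
    (Matrix.ext fun j k => congrArg Prod.snd (h j k))

lemma midem1_sum {ι : Type*} (s : Finset ι) (f : ι → BCMat m p) :
    midem1 (∑ i ∈ s, f i) = ∑ i ∈ s, midem1 (f i) := by
  simp only [midem1, Prod.fst_sum, Prod.snd_sum, Finset.smul_sum, Finset.sum_sub_distrib]

lemma midem2_sum {ι : Type*} (s : Finset ι) (f : ι → BCMat m p) :
    midem2 (∑ i ∈ s, f i) = ∑ i ∈ s, midem2 (f i) := by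
  simp only [midem2, Prod.fst_sum, Prod.snd_sum, Finset.smul_sum, Finset.sum_add_distrib]

lemma midem1_bcOuter (a : m → BC) :
    midem1 (bcOuter a) = vecMulVec (idem1 ∘ a) (star (idem1 ∘ a)) := by
  ext j k
  rw [← idem1_bcEntry, vecMulVec_apply]
  simp only [bcEntry, bcOuter, of_apply, Function.comp_apply, Pi.star_apply, ← idem1_bcStar,
    ← idem1_bcMul]

lemma midem2_bcOuter (a : m → BC) :
    midem2 (bcOuter a) = vecMulVec (idem2 ∘ a) (star (idem2 ∘ a)) := by
  ext j k
  rw [← idem2_bcEntry, vecMulVec_apply]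
  simp only [bcEntry, bcOuter, of_apply, Function.comp_apply, Pi.star_apply, ← idem2_bcStar,
    ← idem2_bcMul]

lemma idem1_bcDinner [Fintype m] (X Y : m → BC) :
    idem1 (bcDinner X Y) = star (idem1 ∘ X) ⬝ᵥ (idem1 ∘ Y) := by
  simp only [bcDinner, idem1_sum, idem1_bcMul, idem1_bcStar, dotProduct, Pi.star_apply,
    Function.comp_apply]

lemma idem2_bcDinner [Fintype m] (X Y : m → BC) :
    idem2 (bcDinner X Y) = star (idem2 ∘ X) ⬝ᵥ (idem2 ∘ Y) := by
  simp only [bcDinner, idem2_sum, idem2_bcMul, idem2_bcStar, dotProduct, Pi.star_apply,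
    Function.comp_apply]

lemma idem1_quadForm [Fintype m] (A : BCMat m m) (c : m → BC) :
    idem1 (quadForm A c) = star (idem1 ∘ c) ⬝ᵥ (midem1 A *ᵥ (idem1 ∘ c)) := by
  simp only [quadForm, idem1_sum, idem1_bcMul, idem1_bcStar, idem1_bcEntry, dotProduct, mulVec,
    Pi.star_apply, Function.comp_apply, Finset.mul_sum]

lemma idem2_quadForm [Fintype m] (A : BCMat m m) (c : m → BC) :
    idem2 (quadForm A c) = star (idem2 ∘ c) ⬝ᵥ (midem2 A *ᵥ (idem2 ∘ c)) := by
  simp only [quadForm, idem2_sum, idem2_bcMul, idem2_bcStar, idem2_bcEntry, dotProduct, mulVec,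
    Pi.star_apply, Function.comp_apply, Finset.mul_sum]

end

theorem Matrix.posSemidef_iff_forall_dotProduct_mulVec_nonneg {m : Type*} [Fintype m]
    {M : Matrix m m ℂ} : M.PosSemidef ↔ ∀ x : m → ℂ, 0 ≤ star x ⬝ᵥ (M *ᵥ x) := by
  classical
  rw [← isPositive_toEuclideanLin_iff, LinearMap.isPositive_iff_complex]
  refine (EuclideanSpace.equiv m ℂ).toEquiv.forall_congr fun x => ?_
  have h : inner ℂ (toEuclideanLin M x) x = star (star x.ofLp ⬝ᵥ (M *ᵥ x.ofLp)) := by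
    rw [EuclideanSpace.inner_eq_star_dotProduct, dotProduct_star, ofLp_toLpLin, toLin'_apply,
      dotProduct_comm]
  change _ ↔ 0 ≤ star x.ofLp ⬝ᵥ (M *ᵥ x.ofLp)
  rw [h]
  generalize star x.ofLp ⬝ᵥ (M *ᵥ x.ofLp) = w
  simp [Complex.ext_iff, Complex.nonneg_iff, eq_comm, and_comm]

theorem Matrix.PosSemidef.exists_pairwise_orthogonal_eq_sum_vecMulVec {𝕜 m : Type*} [RCLike 𝕜]
    [Fintype m] [DecidableEq m] {M : Matrix m m 𝕜} (hM : M.PosSemidef) :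
    ∃ v : m → m → 𝕜, Pairwise (fun i j => star (v i) ⬝ᵥ v j = 0) ∧
      M = ∑ i, vecMulVec (v i) (star (v i)) := by
  have hA := hM.isHermitian
  refine ⟨fun i => (√(hA.eigenvalues i) : 𝕜) • ⇑(hA.eigenvectorBasis i), fun i j hij => ?_, ?_⟩
  · have h : inner 𝕜 (hA.eigenvectorBasis i) (hA.eigenvectorBasis j) = 0 :=
      hA.eigenvectorBasis.orthonormal.2 hij
    rw [EuclideanSpace.inner_eq_star_dotProduct, dotProduct_comm] at h
    simp [star_smul, smul_dotProduct, dotProduct_smul, h]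
  · conv_lhs => rw [hA.spectral_theorem]
    ext j k
    rw [Unitary.conjStarAlgAut_apply, mul_apply, sum_apply]
    refine Finset.sum_congr rfl fun i _ => ?_
    have hμ : (√(hA.eigenvalues i) : 𝕜) * √(hA.eigenvalues i) = hA.eigenvalues i := by
      rw [← RCLike.ofReal_mul, Real.mul_self_sqrt (hM.eigenvalues_nonneg i)]
    simp only [mul_diagonal, star_apply, vecMulVec_apply, Pi.smul_apply, Pi.star_apply, star_smul,
      smul_eq_mul, RCLike.star_def, RCLike.conj_ofReal, Function.comp_apply,
      IsHermitian.eigenvectorUnitary_apply]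
    linear_combination (-(hA.eigenvectorBasis i j * (starRingEnd 𝕜) (hA.eigenvectorBasis i k))) * hμ

theorem hypPos_iff_posSemidef {m : Type} [Fintype m] (A : BCMat m m) :
    HypPos A ↔ (midem1 A).PosSemidef ∧ (midem2 A).PosSemidef := by
  simp only [HypPos, inDplus_iff, idem1_quadForm, idem2_quadForm,
    posSemidef_iff_forall_dotProduct_mulVec_nonneg]
  refine ⟨fun h => ⟨fun x => ?_, fun y => ?_⟩, fun h c => ⟨h.1 _, h.2 _⟩⟩
  · simpa only [idem1_comp_ofIdem] using (h fun k => ofIdem (x k) 0).1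
  · simpa only [idem2_comp_ofIdem] using (h fun k => ofIdem 0 (y k)).2

/-- `A` is hyperbolic positive iff `A = Σᵢ aᵢ·(aᵢ*)ᵗ` for some
bicomplex vectors `a₁,…,a_r`, which may be chosen pairwise orthogonal with
respect to the `𝔻`-valued inner product. -/
theorem hypPos_iff_sum_outer {n : ℕ} (A : BCMat (Fin n) (Fin n)) :
    HypPos A ↔
      ∃ (r : ℕ) (a : Fin r → (Fin n → BC)),
        (∀ i j : Fin r, i ≠ j → bcDinner (a i) (a j) = ((0 : ℂ), (0 : ℂ))) ∧
        A = ∑ i, bcOuter (a i) := by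
  rw [hypPos_iff_posSemidef]
  constructor
  · rintro ⟨h1, h2⟩
    obtain ⟨u, hu_orth, hu⟩ := h1.exists_pairwise_orthogonal_eq_sum_vecMulVec
    obtain ⟨v, hv_orth, hv⟩ := h2.exists_pairwise_orthogonal_eq_sum_vecMulVec
    refine ⟨n, fun i k => ofIdem (u i k) (v i k), fun i j hij => bc_ext_idem ?_ ?_,
      bcMat_ext_midem ?_ ?_⟩
    · rw [idem1_bcDinner, idem1_comp_ofIdem, idem1_comp_ofIdem, hu_orth hij]
      simp [idem1]
    · rw [idem2_bcDinner, idem2_comp_ofIdem, idem2_comp_ofIdem, hv_orth hij]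
      simp [idem2]
    · simpa only [midem1_sum, midem1_bcOuter, idem1_comp_ofIdem] using hu
    · simpa only [midem2_sum, midem2_bcOuter, idem2_comp_ofIdem] using hv
  · rintro ⟨r, a, -, rfl⟩
    simp only [midem1_sum, midem2_sum, midem1_bcOuter, midem2_bcOuter]
    exact ⟨posSemidef_sum _ fun i _ => posSemidef_vecMulVec_self_star _,
      posSemidef_sum _ fun i _ => posSemidef_vecMulVec_self_star _⟩

end
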